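/- Let f ∈ G_s(Z). Then for every (x,x*) ∈ X × X* with (x,x*) ∉ M_f there exists a bounded sequence ((x_n, x_n*))_{n ≥ 1} ⊆ M_f such that x_n ≠ x and x_n* ≠ x* for every n, and ⟨x_n − x, x_n* − x*⟩ / ( ‖x_n − x‖ · ‖x_n* − x*‖ ) → −1 as n → ∞. (In particular, every strongly representable operator is of type ANA.) -/

import Mathlib

/-!
Write `q(x, x*) := ‖x‖²/2 + ‖x*‖²/2`, so that `c + q ≥ 0`. For `f ∈ G(Z)` one has
`inf (f + q) ≤ 0`: otherwise Hahn–Banach gives an affine minorant of `f` lying above `ε - q`,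
and since `q` is its own conjugate its slope `(u*, u**)` satisfies `f*(u*, u**) < ⟨u*, u**⟩`,
contradicting `f* ≥ c`. The class `G(Z)` is invariant under moving the base point to any `z`
(replace `f` by `w ↦ f(z + w) - c(z + w) + c(w)`), so iterating with tolerances `(s/2^k)²` and
passing to the limit (completeness, lower semicontinuity) gives a Brøndsted–Rockafellar
property: if `f z ≤ c z + s²` then `M_f` meets the ball of radius `6 s` around `z`.

Now move `z ∉ M_f` to `0`, so `f 0 > 0`. Points `w = (x, x*)` with `f w + q w < s²` satisfy
`⟨x, x*⟩ + ‖x‖‖x*‖ < s²`, are bounded (by an affine minorant of `f`) and stay away from `0`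
(lower semicontinuity at `0`), so both `x` and `x*` stay away from `0`. The nearby points of
`M_f` keep these properties up to `O(s)`, and `s → 0` gives the sequence.
-/

open NormedSpace Filter

noncomputable section

/-- The coupling `c(x, x*) := ⟨x, x*⟩` on `Z := X × X*`. -/
def coup (X : Type*) [NormedAddCommGroup X] [NormedSpace ℝ X]
    (z : X × StrongDual ℝ X) : ℝ := z.2 z.1

/-- The coupling `c(u*, u**) := ⟨u*, u**⟩` on `Z* := X* × X**`. -/
def coupS (X : Type*) [NormedAddCommGroup X] [NormedSpace ℝ X]
    (p : StrongDual ℝ X × StrongDual ℝ (StrongDual ℝ X)) : ℝ := p.2 p.1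

/-- The Fenchel conjugate `f* : X* × X** → ℝ ∪ {±∞}` of `f : Z → ℝ ∪ {+∞}`. -/
def conjF (X : Type*) [NormedAddCommGroup X] [NormedSpace ℝ X]
    (f : X × StrongDual ℝ X → EReal) (p : StrongDual ℝ X × StrongDual ℝ (StrongDual ℝ X)) : EReal :=
  ⨆ z : X × StrongDual ℝ X, (((p.1 z.1 + p.2 z.2 : ℝ) : EReal) - f z)

/-- `M_f := {z | f z = c z}`. -/
def Mset (X : Type*) [NormedAddCommGroup X] [NormedSpace ℝ X]
    (f : X × StrongDual ℝ X → EReal) : Set (X × StrongDual ℝ X) :=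
  {z | f z = ((coup X z : ℝ) : EReal)}

/-- The `ℓ²`-norm `‖(a, b)‖ := (‖a‖² + ‖b‖²)^{1/2}` on a product. -/
def nrm2 {A B : Type*} [NormedAddCommGroup A] [NormedAddCommGroup B] (p : A × B) : ℝ :=
  Real.sqrt (‖p.1‖ ^ 2 + ‖p.2‖ ^ 2)

theorem EReal.coe_sub_sub_coe_add_coe (x a k : ℝ) (F : EReal) :
    ((x : EReal) - (F - a)) + k = ((x + a + k : ℝ) : EReal) - F := by
  induction F using EReal.rec with
  | bot => simp
  | coe F => norm_cast; ring
  | top => simp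

section AffineSeparation
variable {E : Type*} [NormedAddCommGroup E] [NormedSpace ℝ E]

theorem exists_affine_between {g : E → EReal} {φ : E → ℝ}
    (hg : Convex ℝ {p : E × ℝ | g p.1 ≤ p.2}) (hg_top : ∃ x, g x ≠ ⊤)
    (hφ : ConcaveOn ℝ Set.univ φ) (hφ_cont : Continuous φ)
    (hφg : ∀ x, (φ x : EReal) ≤ g x) :
    ∃ (a : StrongDual ℝ E) (r : ℝ),
      (∀ x, φ x ≤ a x + r) ∧ ∀ x, ((a x + r : ℝ) : EReal) ≤ g x := by
  have hopen : IsOpen {p : E × ℝ | p.2 < φ p.1} :=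
    isOpen_lt continuous_snd (hφ_cont.comp continuous_fst)
  have hconv : Convex ℝ {p : E × ℝ | p.2 < φ p.1} := by
    simpa using hφ.convex_strict_hypograph
  have hdisj : Disjoint {p : E × ℝ | p.2 < φ p.1} {p : E × ℝ | g p.1 ≤ p.2} :=
    Set.disjoint_left.2 fun p hlt hle =>
      absurd ((hφg p.1).trans hle) (not_le.2 (EReal.coe_lt_coe_iff.2 hlt))
  obtain ⟨L, u, hB, hA⟩ := geometric_hahn_banach_open hconv hopen hg hdisj
  set ℓ := L.comp (.inl ℝ E ℝ)
  set s := L (0, 1)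
  have hL : ∀ x t, L (x, t) = ℓ x + t * s := fun x t => by
    rw [show (x, t) = (x, (0 : ℝ)) + t • ((0 : E), (1 : ℝ)) by simp, map_add, map_smul]
    rfl
  have hB' : ∀ x t, t < φ x → ℓ x + t * s < u := fun x t ht => hL x t ▸ hB (x, t) ht
  have hA' : ∀ x (t : ℝ), g x ≤ t → u ≤ ℓ x + t * s := fun x t ht => hL x t ▸ hA (x, t) ht
  -- the separating hyperplane is not vertical, since `g` is finite somewhere
  have hs : 0 < s := by
    obtain ⟨x₀, hx₀⟩ := hg_top
    have hx₀_bot : g x₀ ≠ ⊥ := ne_bot_of_le_ne_bot (EReal.coe_ne_bot _) (hφg x₀)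
    have h₁ := hB' x₀ (φ x₀ - 1) (by linarith)
    have h₂ := hA' x₀ (g x₀).toReal (EReal.le_coe_toReal hx₀)
    have h₃ : φ x₀ ≤ (g x₀).toReal := by
      have := hφg x₀
      rwa [← EReal.coe_toReal hx₀ hx₀_bot, EReal.coe_le_coe_iff] at this
    nlinarith
  have ha : ∀ x, (-s⁻¹ • ℓ) x + u / s = (u - ℓ x) / s := fun x => by
    simp only [_root_.smul_apply, smul_eq_mul]
    field_simp
    ring
  refine ⟨-s⁻¹ • ℓ, u / s, fun x => ?_, fun x => ?_⟩
  · refine le_of_forall_lt fun t ht => ?_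
    rw [ha, lt_div_iff₀ hs]
    linarith [hB' x t ht]
  · refine EReal.le_of_forall_lt_iff_le.1 fun t ht => EReal.coe_le_coe_iff.2 ?_
    rw [ha, div_le_iff₀ hs]
    linarith [hA' x t ht.le]

theorem exists_apply_add_sq_norm_div_two_lt (φ : StrongDual ℝ E) {ε : ℝ} (hε : 0 < ε) :
    ∃ v : E, φ v + ‖v‖ ^ 2 / 2 < -(‖φ‖ ^ 2 / 2) + ε := by
  rcases lt_or_ge (‖φ‖ ^ 2) (2 * ε) with hsmall | hlarge
  · exact ⟨0, by simp; linarith⟩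
  have hr : Real.sqrt (‖φ‖ ^ 2 - 2 * ε) < ‖φ‖ := by
    rw [Real.sqrt_lt' (by nlinarith [norm_nonneg φ])]
    linarith
  obtain ⟨x, hx, hφx⟩ := φ.exists_lt_apply_of_lt_opNorm hr
  have hφx_sq : ‖φ‖ ^ 2 - 2 * ε < (φ x) ^ 2 := by
    rw [← Real.sq_sqrt (by linarith : 0 ≤ ‖φ‖ ^ 2 - 2 * ε), ← sq_abs (φ x)]
    exact pow_lt_pow_left₀ hφx (Real.sqrt_nonneg _) two_ne_zero
  -- `v = -(φ x) • x` gives `φ v + ‖v‖² / 2 ≤ -(φ x)² / 2` because `‖x‖ < 1`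
  refine ⟨-(φ x) • x, ?_⟩
  rw [map_smul, smul_eq_mul, norm_smul, Real.norm_eq_abs, mul_pow, sq_abs]
  nlinarith [sq_nonneg (φ x), pow_le_one₀ (norm_nonneg x) hx.le (n := 2)]

end AffineSeparation

section HalfSqNorm
variable {E F : Type*} [NormedAddCommGroup E] [NormedAddCommGroup F]

def halfSqNorm (p : E × F) : ℝ := ‖p.1‖ ^ 2 / 2 + ‖p.2‖ ^ 2 / 2

theorem continuous_halfSqNorm : Continuous (halfSqNorm : E × F → ℝ) := by
  unfold halfSqNorm; fun_prop

theorem halfSqNorm_nonneg (p : E × F) : 0 ≤ halfSqNorm p := by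
  unfold halfSqNorm; positivity

theorem norm_mul_norm_le_halfSqNorm (p : E × F) : ‖p.1‖ * ‖p.2‖ ≤ halfSqNorm p := by
  unfold halfSqNorm; nlinarith [sq_nonneg (‖p.1‖ - ‖p.2‖)]

variable [NormedSpace ℝ E] [NormedSpace ℝ F]

theorem convexOn_univ_sq_norm_div_two : ConvexOn ℝ Set.univ fun x : E => ‖x‖ ^ 2 / 2 := by
  have := ((convexOn_norm (E := E) convex_univ).pow (fun x _ => norm_nonneg x) 2).smul
    (by norm_num : (0 : ℝ) ≤ 1 / 2)
  simpa [div_eq_inv_mul] using this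

theorem convexOn_halfSqNorm : ConvexOn ℝ Set.univ (halfSqNorm : E × F → ℝ) :=
  (convexOn_univ_sq_norm_div_two.comp_linearMap (LinearMap.fst ℝ E F)).add
    (convexOn_univ_sq_norm_div_two.comp_linearMap (LinearMap.snd ℝ E F))

theorem neg_halfSqNorm_le_apply (p : E × StrongDual ℝ E) : -halfSqNorm p ≤ p.2 p.1 := by
  nlinarith [neg_le_of_abs_le (p.2.le_opNorm p.1), norm_mul_norm_le_halfSqNorm p]

def splitDual (a : StrongDual ℝ (E × F)) : StrongDual ℝ E × StrongDual ℝ F :=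
  (a.comp (.inl ℝ E F), a.comp (.inr ℝ E F))

theorem splitDual_apply (a : StrongDual ℝ (E × F)) (w : E × F) :
    (splitDual a).1 w.1 + (splitDual a).2 w.2 = a w :=
  a.comp_inl_add_comp_inr w

theorem sq_norm_sub_norm_splitDual_le (a : StrongDual ℝ (E × F)) (w : E × F) :
    (‖w.1‖ - ‖(splitDual a).1‖) ^ 2 + (‖w.2‖ - ‖(splitDual a).2‖) ^ 2
      ≤ 2 * (a w + halfSqNorm w + halfSqNorm (splitDual a)) := by
  have h₁ := neg_le_of_abs_le ((splitDual a).1.le_opNorm w.1)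
  have h₂ := neg_le_of_abs_le ((splitDual a).2.le_opNorm w.2)
  rw [← splitDual_apply, halfSqNorm, halfSqNorm]
  nlinarith

/-- The Fenchel conjugate of `halfSqNorm` is `halfSqNorm ∘ splitDual`. -/
theorem le_neg_halfSqNorm_splitDual {a : StrongDual ℝ (E × F)} {γ : ℝ}
    (h : ∀ w, γ ≤ a w + halfSqNorm w) : γ ≤ -halfSqNorm (splitDual a) := by
  refine le_of_forall_pos_lt_add fun ε hε => ?_
  obtain ⟨v₁, hv₁⟩ := exists_apply_add_sq_norm_div_two_lt (splitDual a).1 (half_pos hε)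
  obtain ⟨v₂, hv₂⟩ := exists_apply_add_sq_norm_div_two_lt (splitDual a).2 (half_pos hε)
  have := h (v₁, v₂)
  rw [← splitDual_apply] at this
  simp only [halfSqNorm] at this ⊢
  linarith

theorem apply_add_norm_mul_norm_le (p q : E × StrongDual ℝ E) :
    p.2 p.1 + ‖p.1‖ * ‖p.2‖ ≤ q.2 q.1 + ‖q.1‖ * ‖q.2‖ + 2 * (‖p‖ + ‖q‖) * ‖p - q‖ := by
  have hp₁ := norm_fst_le p
  have hp₂ := norm_snd_le p
  have hq₁ := norm_fst_le q
  have hq₂ := norm_snd_le q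
  have hd₁ : ‖p.1 - q.1‖ ≤ ‖p - q‖ := norm_fst_le (p - q)
  have hd₂ : ‖p.2 - q.2‖ ≤ ‖p - q‖ := norm_snd_le (p - q)
  have hpair : p.2 p.1 - q.2 q.1 ≤ (‖p‖ + ‖q‖) * ‖p - q‖ := by
    calc p.2 p.1 - q.2 q.1 = p.2 (p.1 - q.1) + (p.2 - q.2) q.1 := by
          simp only [map_sub, sub_apply]; ring
      _ ≤ ‖p.2‖ * ‖p.1 - q.1‖ + ‖p.2 - q.2‖ * ‖q.1‖ :=
          add_le_add (le_of_abs_le (p.2.le_opNorm _)) (le_of_abs_le ((p.2 - q.2).le_opNorm _))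
      _ ≤ ‖p‖ * ‖p - q‖ + ‖p - q‖ * ‖q‖ := by gcongr
      _ = (‖p‖ + ‖q‖) * ‖p - q‖ := by ring
  have hnorm : ‖p.1‖ * ‖p.2‖ - ‖q.1‖ * ‖q.2‖ ≤ (‖p‖ + ‖q‖) * ‖p - q‖ := by
    calc ‖p.1‖ * ‖p.2‖ - ‖q.1‖ * ‖q.2‖
        = ‖p.1‖ * (‖p.2‖ - ‖q.2‖) + (‖p.1‖ - ‖q.1‖) * ‖q.2‖ := by ring
      _ ≤ ‖p.1‖ * |‖p.2‖ - ‖q.2‖| + |‖p.1‖ - ‖q.1‖| * ‖q.2‖ := by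
          gcongr <;> exact le_abs_self _
      _ ≤ ‖p‖ * ‖p - q‖ + ‖p - q‖ * ‖q‖ := by
          gcongr
          exacts [(abs_norm_sub_norm_le _ _).trans hd₂, (abs_norm_sub_norm_le _ _).trans hd₁]
      _ = (‖p‖ + ‖q‖) * ‖p - q‖ := by ring
  nlinarith [norm_nonneg (p - q), norm_nonneg p, norm_nonneg q]

theorem apply_div_norm_mul_norm_mem_Icc {p : E × StrongDual ℝ E} {m : ℝ} (hm : 0 < m)
    (h₁ : m ≤ ‖p.1‖) (h₂ : m ≤ ‖p.2‖) :
    p.2 p.1 / (‖p.1‖ * ‖p.2‖) ∈ Set.Icc (-1) (-1 + (p.2 p.1 + ‖p.1‖ * ‖p.2‖) / m ^ 2) := by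
  have hD : m ^ 2 ≤ ‖p.1‖ * ‖p.2‖ := by nlinarith
  have hD_pos : 0 < ‖p.1‖ * ‖p.2‖ := (pow_pos hm 2).trans_le hD
  have hgap : 0 ≤ p.2 p.1 + ‖p.1‖ * ‖p.2‖ := by
    nlinarith [neg_le_of_abs_le (p.2.le_opNorm p.1)]
  have hratio : p.2 p.1 / (‖p.1‖ * ‖p.2‖)
      = -1 + (p.2 p.1 + ‖p.1‖ * ‖p.2‖) / (‖p.1‖ * ‖p.2‖) := by
    rw [add_div, div_self hD_pos.ne']; ring
  rw [hratio]
  exact ⟨le_add_of_nonneg_right (div_nonneg hgap hD_pos.le),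
    add_le_add le_rfl (div_le_div_of_nonneg_left hgap (by positivity) hD)⟩

end HalfSqNorm

theorem LowerSemicontinuousAt.exists_forall_le_norm {E : Type*} [SeminormedAddCommGroup E]
    {g : E → EReal} (hg : LowerSemicontinuousAt g 0) (hg0 : 0 < g 0) :
    ∃ ρ > (0 : ℝ), ∃ δ > 0, ∀ w, g w ≤ (ρ : EReal) → δ ≤ ‖w‖ := by
  obtain ⟨ρ, hρ₀, hρ⟩ := EReal.exists_between_coe_real hg0
  obtain ⟨δ, hδ, hball⟩ := Metric.eventually_nhds_iff.1 (hg ρ hρ)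
  refine ⟨ρ, EReal.coe_pos.1 hρ₀, δ, hδ, fun w hw => ?_⟩
  by_contra! hlt
  exact (hball (by rwa [dist_zero_right])).not_ge hw

theorem nrm2_le_two_mul_norm {A B : Type*} [NormedAddCommGroup A] [NormedAddCommGroup B]
    (p : A × B) : nrm2 p ≤ 2 * ‖p‖ := by
  rw [nrm2, Real.sqrt_le_left (by positivity)]
  nlinarith [norm_fst_le p, norm_snd_le p, norm_nonneg p.1, norm_nonneg p.2]

section ClassG
variable {X : Type*} [NormedAddCommGroup X] [NormedSpace ℝ X]

/-- The class `G(Z)`. -/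
structure MemG (f : X × StrongDual ℝ X → EReal) : Prop where
  exists_ne_top : ∃ z, f z ≠ ⊤
  convex_epigraph : Convex ℝ {p : (X × StrongDual ℝ X) × ℝ | f p.1 ≤ (p.2 : EReal)}
  coup_le : ∀ z, ((coup X z : ℝ) : EReal) ≤ f z
  coupS_le_conjF : ∀ p, ((coupS X p : ℝ) : EReal) ≤ conjF X f p

variable {f : X × StrongDual ℝ X → EReal}

theorem coup_zero : coup X 0 = 0 := by simp [coup]

theorem continuous_coup : Continuous (coup X) := by
  unfold coup; fun_prop

theorem neg_halfSqNorm_le_coup (w : X × StrongDual ℝ X) : -halfSqNorm w ≤ coup X w :=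
  neg_halfSqNorm_le_apply w

theorem mem_Mset_iff_le (hf : MemG f) {z : X × StrongDual ℝ X} :
    z ∈ Mset X f ↔ f z ≤ coup X z :=
  ⟨le_of_eq, fun h => le_antisymm h (hf.coup_le z)⟩

theorem MemG.zero_lt_apply_zero (hf : MemG f) (h0 : (0 : X × StrongDual ℝ X) ∉ Mset X f) :
    0 < f 0 := by
  refine lt_of_le_of_ne ?_ fun h => h0 ?_
  · simpa [coup_zero] using hf.coup_le 0
  · simp [Mset, coup_zero, ← h]

theorem MemG.zero_sub_halfSqNorm_le (hf : MemG f) (w : X × StrongDual ℝ X) :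
    ((0 - halfSqNorm w : ℝ) : EReal) ≤ f w :=
  (EReal.coe_le_coe_iff.2 (by linarith [neg_halfSqNorm_le_coup w])).trans (hf.coup_le w)

theorem conjF_splitDual_le {a : StrongDual ℝ (X × StrongDual ℝ X)} {r : ℝ}
    (h : ∀ w, ((a w + r : ℝ) : EReal) ≤ f w) :
    conjF X f (splitDual a) ≤ ((-r : ℝ) : EReal) := by
  refine iSup_le fun w => EReal.sub_le_of_le_add ?_
  rw [splitDual_apply]
  calc ((a w : ℝ) : EReal) = ((-r : ℝ) : EReal) + ((a w + r : ℝ) : EReal) := by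
        rw [← EReal.coe_add]; ring_nf
    _ ≤ ((-r : ℝ) : EReal) + f w := add_le_add le_rfl (h w)

theorem MemG.exists_affine_minorant (hf : MemG f) {β : ℝ}
    (hβ : ∀ w, ((β - halfSqNorm w : ℝ) : EReal) ≤ f w) :
    ∃ (a : StrongDual ℝ (X × StrongDual ℝ X)) (r : ℝ),
      halfSqNorm (splitDual a) ≤ r - β ∧ ∀ w, ((a w + r : ℝ) : EReal) ≤ f w := by
  obtain ⟨a, r, hlow, hup⟩ := exists_affine_between (φ := fun w => β - halfSqNorm w)
    hf.convex_epigraph hf.exists_ne_top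
    ((concaveOn_const β convex_univ).sub convexOn_halfSqNorm)
    (continuous_const.sub continuous_halfSqNorm) hβ
  refine ⟨a, r, ?_, hup⟩
  have := le_neg_halfSqNorm_splitDual (a := a) (γ := β - r) fun w => by linarith [hlow w]
  linarith

theorem MemG.exists_lt_sub_halfSqNorm (hf : MemG f) {ε : ℝ} (hε : 0 < ε) :
    ∃ w, f w < ((ε - halfSqNorm w : ℝ) : EReal) := by
  by_contra! h
  obtain ⟨a, r, hq, hle⟩ := hf.exists_affine_minorant h
  have hdual := EReal.coe_le_coe_iff.1
    ((hf.coupS_le_conjF (splitDual a)).trans (conjF_splitDual_le hle))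
  have := neg_halfSqNorm_le_apply (splitDual a)
  rw [coupS] at hdual
  linarith

theorem MemG.exists_norm_le_of_le_sub_halfSqNorm (hf : MemG f) (κ : ℝ) :
    ∃ C, ∀ w, f w ≤ ((κ - halfSqNorm w : ℝ) : EReal) → ‖w‖ ≤ C := by
  obtain ⟨a, r, hq, hle⟩ := hf.exists_affine_minorant hf.zero_sub_halfSqNorm_le
  set u := splitDual a
  refine ⟨‖u.1‖ + ‖u.2‖ + |κ| + 1, fun w hw => ?_⟩
  have h₁ : a w + r ≤ κ - halfSqNorm w := EReal.coe_le_coe_iff.1 ((hle w).trans hw)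
  have h₂ := sq_norm_sub_norm_splitDual_le a w
  have hκ := le_abs_self κ
  rw [norm_prod_le_iff]
  constructor <;>
    nlinarith [sq_nonneg (‖w.1‖ - ‖u.1‖ - 1), sq_nonneg (‖w.2‖ - ‖u.2‖ - 1),
      norm_nonneg u.1, norm_nonneg u.2]

theorem MemG.exists_le_coup_add_sq_div_two_of_apply_zero_le (hf : MemG f) {s : ℝ}
    (hs : 0 < s) (h0 : f 0 ≤ ((s ^ 2 : ℝ) : EReal)) :
    ∃ w, f w ≤ ((coup X w + (s / 2) ^ 2 : ℝ) : EReal) ∧ ‖w‖ ≤ 3 * s := by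
  obtain ⟨a, r, hq, hle⟩ := hf.exists_affine_minorant hf.zero_sub_halfSqNorm_le
  set u := splitDual a
  have hr : r ≤ s ^ 2 := by
    simpa only [map_zero, zero_add, EReal.coe_le_coe_iff] using (hle 0).trans h0
  obtain ⟨w, hw⟩ := hf.exists_lt_sub_halfSqNorm (ε := (s / 2) ^ 2) (by positivity)
  have h₁ : a w + r < (s / 2) ^ 2 - halfSqNorm w :=
    EReal.coe_lt_coe_iff.1 ((hle w).trans_lt hw)
  have h₂ := sq_norm_sub_norm_splitDual_le a w
  have hu : ‖u.1‖ ^ 2 / 2 + ‖u.2‖ ^ 2 / 2 ≤ s ^ 2 := by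
    rw [← halfSqNorm]; linarith
  refine ⟨w, hw.le.trans (EReal.coe_le_coe_iff.2 (by linarith [neg_halfSqNorm_le_coup w])),
    norm_prod_le_iff.2 ⟨?_, ?_⟩⟩
  · have : ‖w.1‖ - ‖u.1‖ ≤ s := by nlinarith
    nlinarith [norm_nonneg u.1, norm_nonneg u.2]
  · have : ‖w.2‖ - ‖u.2‖ ≤ s := by nlinarith
    nlinarith [norm_nonneg u.1, norm_nonneg u.2]

end ClassG

section Shift
variable {X : Type*} [NormedAddCommGroup X] [NormedSpace ℝ X]
variable {f : X × StrongDual ℝ X → EReal}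

/-- `f` seen from `z`: `shiftAt f z - c = (f - c) ∘ (z + ·)`. -/
def shiftAt (f : X × StrongDual ℝ X → EReal) (z w : X × StrongDual ℝ X) : EReal :=
  f (z + w) - ((coup X (z + w) - coup X w : ℝ) : EReal)

theorem shiftAt_le_coe_iff {z w : X × StrongDual ℝ X} {t : ℝ} :
    shiftAt f z w ≤ t ↔ f (z + w) ≤ ((t + (coup X (z + w) - coup X w) : ℝ) : EReal) := by
  rw [shiftAt, EReal.sub_le_iff_le_add (.inl (EReal.coe_ne_bot _))
    (.inl (EReal.coe_ne_top _)), EReal.coe_add]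

theorem shiftAt_le_coup_add_iff {z w : X × StrongDual ℝ X} {δ : ℝ} :
    shiftAt f z w ≤ ((coup X w + δ : ℝ) : EReal) ↔
      f (z + w) ≤ ((coup X (z + w) + δ : ℝ) : EReal) := by
  rw [shiftAt_le_coe_iff,
    show coup X w + δ + (coup X (z + w) - coup X w) = coup X (z + w) + δ by ring]

theorem coupS_le_conjF_shiftAt (hf : ∀ p, ((coupS X p : ℝ) : EReal) ≤ conjF X f p)
    (z : X × StrongDual ℝ X) (p : StrongDual ℝ X × StrongDual ℝ (StrongDual ℝ X)) :
    ((coupS X p : ℝ) : EReal) ≤ conjF X (shiftAt f z) p := by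
  -- the conjugate of `shiftAt f z` at `p` is that of `f` at `q`, shifted by the constant `k`
  set q : StrongDual ℝ X × StrongDual ℝ (StrongDual ℝ X) :=
    (p.1 + z.2, p.2 + inclusionInDoubleDual ℝ X z.1)
  set k := p.1 z.1 + p.2 z.2 + coup X z
  have hq : coupS X q = coupS X p + k := by
    simp only [coupS, coup, q, k, add_apply, map_add, dual_def]
    ring
  have hconj : conjF X f q ≤ conjF X (shiftAt f z) p + k := by
    refine iSup_le fun v => ?_
    calc ((q.1 v.1 + q.2 v.2 : ℝ) : EReal) - f v
        = (((p.1 (v - z).1 + p.2 (v - z).2 : ℝ) : EReal) - shiftAt f z (v - z)) + k := by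
          rw [shiftAt, add_sub_cancel, EReal.coe_sub_sub_coe_add_coe]
          congr 2
          simp only [coup, q, k, Prod.fst_sub, Prod.snd_sub, add_apply, sub_apply, map_sub,
            dual_def]
          ring
      _ ≤ conjF X (shiftAt f z) p + k :=
          add_le_add (le_iSup (fun w => ((p.1 w.1 + p.2 w.2 : ℝ) : EReal) - shiftAt f z w)
            (v - z)) le_rfl
  have := (hf q).trans hconj
  rwa [hq, EReal.coe_add, (EReal.addLECancellable_coe k).add_le_add_iff_right] at this

theorem memG_shiftAt (hf : MemG f) (z : X × StrongDual ℝ X) : MemG (shiftAt f z) where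
  exists_ne_top := by
    obtain ⟨v, hv⟩ := hf.exists_ne_top
    refine ⟨v - z, ne_top_of_le_ne_top
      (EReal.coe_ne_top ((f v).toReal - (coup X v - coup X (v - z)))) ?_⟩
    rw [shiftAt_le_coe_iff, add_sub_cancel, sub_add_cancel]
    exact EReal.le_coe_toReal hv
  convex_epigraph := by
    have hΛ : IsLinearMap ℝ fun p : (X × StrongDual ℝ X) × ℝ =>
        (p.1, p.2 + z.2 p.1.1 + p.1.2 z.1) :=
      ⟨fun p q => by ext <;> simp; ring, fun c p => by ext <;> simp; ring⟩
    have hepi : {p : (X × StrongDual ℝ X) × ℝ | shiftAt f z p.1 ≤ (p.2 : EReal)} =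
        (fun p => (p.1, p.2 + z.2 p.1.1 + p.1.2 z.1)) ⁻¹' ((fun p => (z, coup X z) + p) ⁻¹'
          {p : (X × StrongDual ℝ X) × ℝ | f p.1 ≤ (p.2 : EReal)}) := by
      ext p
      simp only [Set.mem_preimage, Set.mem_ofPred_eq, shiftAt_le_coe_iff, Prod.mk_add_mk]
      congr! 2
      simp only [coup, Prod.fst_add, Prod.snd_add, add_apply, map_add]
      ring
    rw [hepi]
    exact (hf.convex_epigraph.translate_preimage_right _).is_linear_preimage hΛ
  coup_le w := by
    rw [shiftAt, EReal.le_sub_iff_add_le (.inl (EReal.coe_ne_bot _))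
      (.inl (EReal.coe_ne_top _)), ← EReal.coe_add, add_sub_cancel]
    exact hf.coup_le _
  coupS_le_conjF := coupS_le_conjF_shiftAt hf.coupS_le_conjF z

theorem lowerSemicontinuous_shiftAt (hf : LowerSemicontinuous f) (z : X × StrongDual ℝ X) :
    LowerSemicontinuous (shiftAt f z) := by
  have hA : Continuous fun w => coup X (z + w) - coup X w := by
    unfold coup; fun_prop
  have : shiftAt f z = fun w => f (z + w) + ((-(coup X (z + w) - coup X w) : ℝ) : EReal) := by
    funext w; rw [shiftAt, sub_eq_add_neg, EReal.coe_neg]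
  rw [this]
  exact (hf.comp (continuous_const_add z)).add'
    (continuous_coe_real_ereal.comp hA.neg).lowerSemicontinuous
    fun w => EReal.continuousAt_add (.inr (EReal.coe_ne_bot _)) (.inr (EReal.coe_ne_top _))

theorem mem_Mset_shiftAt_iff (hf : MemG f) {z w : X × StrongDual ℝ X} :
    w ∈ Mset X (shiftAt f z) ↔ z + w ∈ Mset X f := by
  rw [mem_Mset_iff_le hf, mem_Mset_iff_le (memG_shiftAt hf z), ← add_zero (coup X w),
    ← add_zero (coup X (z + w)), shiftAt_le_coup_add_iff]

theorem MemG.exists_le_coup_add_sq_div_two_of_le (hf : MemG f) {s : ℝ} (hs : 0 < s)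
    {z : X × StrongDual ℝ X} (hz : f z ≤ ((coup X z + s ^ 2 : ℝ) : EReal)) :
    ∃ z', f z' ≤ ((coup X z' + (s / 2) ^ 2 : ℝ) : EReal) ∧ ‖z' - z‖ ≤ 3 * s := by
  have h0 : shiftAt f z 0 ≤ ((s ^ 2 : ℝ) : EReal) := by
    rw [← zero_add (s ^ 2), ← coup_zero (X := X), shiftAt_le_coup_add_iff, add_zero]
    exact hz
  obtain ⟨w, hw, hnorm⟩ :=
    (memG_shiftAt hf z).exists_le_coup_add_sq_div_two_of_apply_zero_le hs h0
  exact ⟨z + w, shiftAt_le_coup_add_iff.1 hw, by simpa using hnorm⟩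

theorem MemG.exists_mem_Mset_norm_sub_le [CompleteSpace X] (hf : MemG f)
    (hlsc : LowerSemicontinuous f) {s : ℝ} (hs : 0 < s) {z : X × StrongDual ℝ X}
    (hz : f z ≤ ((coup X z + s ^ 2 : ℝ) : EReal)) :
    ∃ z' ∈ Mset X f, ‖z' - z‖ ≤ 6 * s := by
  have hstep : ∀ (k : ℕ) (y : X × StrongDual ℝ X),
      f y ≤ ((coup X y + (s / 2 ^ k) ^ 2 : ℝ) : EReal) →
      ∃ y', f y' ≤ ((coup X y' + (s / 2 ^ (k + 1)) ^ 2 : ℝ) : EReal) ∧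
        ‖y' - y‖ ≤ 3 * (s / 2 ^ k) := by
    intro k y hy
    rw [show s / 2 ^ (k + 1) = s / 2 ^ k / 2 by rw [pow_succ, div_div]]
    exact hf.exists_le_coup_add_sq_div_two_of_le (by positivity) hy
  choose! next hnext hdist using hstep
  let y : ℕ → X × StrongDual ℝ X := fun k => Nat.rec z (fun k y => next k y) k
  have hy : ∀ k, f (y k) ≤ ((coup X (y k) + (s / 2 ^ k) ^ 2 : ℝ) : EReal) := by
    intro k
    induction k with
    | zero => simpa [y] using hz
    | succ k ih => exact hnext k _ ih
  have hgeom : ∀ k, dist (y k) (y (k + 1)) ≤ 6 * s / 2 / 2 ^ k := fun k => by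
    rw [dist_comm, dist_eq_norm]
    exact (hdist k _ (hy k)).trans_eq (by ring)
  obtain ⟨z', hz'⟩ := cauchySeq_tendsto_of_complete (cauchySeq_of_le_geometric_two hgeom)
  refine ⟨z', (mem_Mset_iff_le hf).2 ?_, ?_⟩
  · have hbound : Tendsto (fun k : ℕ => coup X (y k) + (s / 2 ^ k) ^ 2) atTop
        (nhds (coup X z')) := by
      simpa using ((continuous_coup.tendsto z').comp hz').add
        (((tendsto_const_nhds (x := s)).div_atTop
          (tendsto_pow_atTop_atTop_of_one_lt one_lt_two)).pow 2)
    exact hlsc.isClosed_epigraph.mem_of_tendsto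
      (hz'.prodMk_nhds ((continuous_coe_real_ereal.tendsto _).comp hbound)) (.of_forall hy)
  · rw [← dist_eq_norm, dist_comm]
    exact dist_le_of_le_geometric_two_of_tendsto₀ hgeom hz'

end Shift

section Antiparallel
variable {X : Type*} [NormedAddCommGroup X] [NormedSpace ℝ X]
variable {f : X × StrongDual ℝ X → EReal}

theorem le_norm_fst_and_le_norm_snd {w : X × StrongDual ℝ X} {s δ : ℝ} (hs : 0 ≤ s)
    (hw : coup X w + halfSqNorm w < s ^ 2) (hδ : δ ≤ ‖w‖) :
    δ - 2 * s ≤ ‖w.1‖ ∧ δ - 2 * s ≤ ‖w.2‖ := by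
  have hsq : (‖w.1‖ - ‖w.2‖) ^ 2 < (2 * s) ^ 2 := by
    have := neg_le_of_abs_le (w.2.le_opNorm w.1)
    rw [coup, halfSqNorm] at hw
    nlinarith
  have habs := abs_lt_of_sq_lt_sq' hsq (by positivity)
  rw [Prod.norm_def] at hδ
  rcases max_cases ‖w.1‖ ‖w.2‖ with ⟨h, -⟩ | ⟨h, -⟩ <;> constructor <;>
    linarith [habs.1, habs.2]

theorem MemG.exists_mem_Mset_almost_antiparallel [CompleteSpace X] (hf : MemG f)
    (hlsc : LowerSemicontinuous f) (h0 : (0 : X × StrongDual ℝ X) ∉ Mset X f) :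
    ∃ m > 0, ∃ C, ∀ η > 0, ∃ v ∈ Mset X f,
      m ≤ ‖v.1‖ ∧ m ≤ ‖v.2‖ ∧ ‖v‖ ≤ C ∧ coup X v + ‖v.1‖ * ‖v.2‖ ≤ η := by
  obtain ⟨ρ, hρ, δ, hδ, hfar⟩ :=
    LowerSemicontinuousAt.exists_forall_le_norm (hlsc 0) (hf.zero_lt_apply_zero h0)
  obtain ⟨C, hC⟩ := hf.exists_norm_le_of_le_sub_halfSqNorm 1
  refine ⟨δ / 2, by positivity, C + 1, fun η hη => ?_⟩
  set s := min (min (1 / 6) ρ) (min (δ / 16) (η / (24 * |C| + 13)))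
  have hs : 0 < s := by positivity
  have hs₁ : s ≤ 1 / 6 := (min_le_left _ _).trans (min_le_left _ _)
  have hsρ : s ≤ ρ := (min_le_left _ _).trans (min_le_right _ _)
  have hsδ : s ≤ δ / 16 := (min_le_right _ _).trans (min_le_left _ _)
  have hsη : s * (24 * |C| + 13) ≤ η :=
    (le_div_iff₀ (by positivity)).1 ((min_le_right _ _).trans (min_le_right _ _))
  obtain ⟨w, hw⟩ := hf.exists_lt_sub_halfSqNorm (pow_pos hs 2)
  have hwC : ‖w‖ ≤ C := hC w (hw.le.trans (EReal.coe_le_coe_iff.2 (by nlinarith)))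
  have hwδ : δ ≤ ‖w‖ :=
    hfar w (hw.le.trans (EReal.coe_le_coe_iff.2 (by nlinarith [halfSqNorm_nonneg w])))
  have hgap : coup X w + halfSqNorm w < s ^ 2 := by
    linarith [EReal.coe_lt_coe_iff.1 ((hf.coup_le w).trans_lt hw)]
  obtain ⟨v, hvM, hvw⟩ := hf.exists_mem_Mset_norm_sub_le hlsc hs
    (hw.le.trans (EReal.coe_le_coe_iff.2 (by linarith [neg_halfSqNorm_le_coup w])))
  obtain ⟨hw₁, hw₂⟩ := le_norm_fst_and_le_norm_snd hs.le hgap hwδ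
  have hv₁ : ‖v.1 - w.1‖ ≤ 6 * s := (norm_fst_le (v - w)).trans hvw
  have hv₂ : ‖v.2 - w.2‖ ≤ 6 * s := (norm_snd_le (v - w)).trans hvw
  have hvC : ‖v‖ ≤ C + 1 := by linarith [norm_le_insert' v w]
  refine ⟨v, hvM, ?_, ?_, hvC, ?_⟩
  · linarith [norm_sub_norm_le w.1 v.1, norm_sub_rev w.1 v.1]
  · linarith [norm_sub_norm_le w.2 v.2, norm_sub_rev w.2 v.2]
  · have hvw_gap := apply_add_norm_mul_norm_le v w
    have hw_gap : coup X w + ‖w.1‖ * ‖w.2‖ < s ^ 2 := by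
      linarith [norm_mul_norm_le_halfSqNorm w]
    have hC' := le_abs_self C
    have : 2 * (‖v‖ + ‖w‖) * ‖v - w‖ ≤ 2 * (2 * |C| + 1) * (6 * s) :=
      mul_le_mul (by linarith) hvw (norm_nonneg _) (by positivity)
    unfold coup at hw_gap ⊢
    nlinarith

theorem MemG.exists_seq_tendsto_neg_one [CompleteSpace X] (hf : MemG f)
    (hlsc : LowerSemicontinuous f) (h0 : (0 : X × StrongDual ℝ X) ∉ Mset X f) :
    ∃ v : ℕ → X × StrongDual ℝ X, (∀ n, v n ∈ Mset X f) ∧ (∃ C, ∀ n, ‖v n‖ ≤ C) ∧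
      (∀ n, (v n).1 ≠ 0) ∧ (∀ n, (v n).2 ≠ 0) ∧
      Tendsto (fun n => (v n).2 (v n).1 / (‖(v n).1‖ * ‖(v n).2‖)) atTop (nhds (-1)) := by
  obtain ⟨m, hm, C, h⟩ := hf.exists_mem_Mset_almost_antiparallel hlsc h0
  choose v hvM hv₁ hv₂ hvC hvη using fun n : ℕ => h (1 / (n + 1)) Nat.one_div_pos_of_nat
  refine ⟨v, hvM, ⟨C, hvC⟩, fun n h => ?_, fun n h => ?_, ?_⟩
  · linarith [hv₁ n, norm_le_zero_iff.2 h]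
  · linarith [hv₂ n, norm_le_zero_iff.2 h]
  have hbound := fun n => apply_div_norm_mul_norm_mem_Icc hm (hv₁ n) (hv₂ n)
  have hupper : Tendsto (fun n : ℕ => -1 + 1 / (n + 1) / m ^ 2) atTop (nhds (-1)) := by
    simpa using
      (tendsto_one_div_add_atTop_nhds_zero_nat.div_const (m ^ 2)).const_add (-1 : ℝ)
  refine tendsto_of_tendsto_of_tendsto_of_le_of_le tendsto_const_nhds hupper
    (fun n => (hbound n).1) fun n => (hbound n).2.trans ?_
  gcongr
  exact hvη n

end Antiparallel

theorem stmt19_general {X : Type*} [NormedAddCommGroup X] [NormedSpace ℝ X] [CompleteSpace X]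
    (f : X × StrongDual ℝ X → EReal)
    (hproper : ∃ z, f z ≠ ⊤)
    (hconv : Convex ℝ {p : (X × StrongDual ℝ X) × ℝ | f p.1 ≤ (p.2 : EReal)})
    (hge : ∀ z, ((coup X z : ℝ) : EReal) ≤ f z)
    (hgeS : ∀ p, ((coupS X p : ℝ) : EReal) ≤ conjF X f p)
    (hlsc : LowerSemicontinuous f)
    (z : X × StrongDual ℝ X) (hz : z ∉ Mset X f) :
    ∃ u : ℕ → X × StrongDual ℝ X,
      (∀ n, u n ∈ Mset X f) ∧
      (∃ C : ℝ, ∀ n, nrm2 (u n) ≤ C) ∧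
      (∀ n, (u n).1 ≠ z.1) ∧
      (∀ n, (u n).2 ≠ z.2) ∧
      Tendsto (fun n =>
          ((u n).2 - z.2) ((u n).1 - z.1) / (‖(u n).1 - z.1‖ * ‖(u n).2 - z.2‖))
        atTop (nhds (-1)) := by
  have hf : MemG f := ⟨hproper, hconv, hge, hgeS⟩
  have h0 : (0 : X × StrongDual ℝ X) ∉ Mset X (shiftAt f z) := by
    rwa [mem_Mset_shiftAt_iff hf, add_zero]
  obtain ⟨v, hvM, ⟨C, hvC⟩, hv₁, hv₂, hlim⟩ :=
    (memG_shiftAt hf z).exists_seq_tendsto_neg_one (lowerSemicontinuous_shiftAt hlsc z) h0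
  refine ⟨fun n => z + v n, fun n => (mem_Mset_shiftAt_iff hf).1 (hvM n),
    ⟨2 * (‖z‖ + C), fun n => ?_⟩, fun n => ?_, fun n => ?_, ?_⟩
  · exact (nrm2_le_two_mul_norm _).trans (by linarith [norm_add_le z (v n), hvC n])
  · simpa using hv₁ n
  · simpa using hv₂ n
  · simpa using hlim

/-- for `f ∈ G_s(Z)` and `(x, x*) ∉ M_f` there is a bounded sequence
`((x_n, x_n*)) ⊆ M_f` with `x_n ≠ x`, `x_n* ≠ x*` for all `n` and
`⟨x_n - x, x_n* - x*⟩ / (‖x_n - x‖ ‖x_n* - x*‖) → -1`; so strongly representable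
operators are of type ANA. -/
theorem stmt19 {X : Type*} [NormedAddCommGroup X] [NormedSpace ℝ X] [CompleteSpace X]
    (f : X × StrongDual ℝ X → EReal)
    (hne_bot : ∀ z, f z ≠ ⊥) (hproper : ∃ z, f z ≠ ⊤)
    (hconv : Convex ℝ {p : (X × StrongDual ℝ X) × ℝ | f p.1 ≤ (p.2 : EReal)})
    (hge : ∀ z, ((coup X z : ℝ) : EReal) ≤ f z)
    (hgeS : ∀ p, ((coupS X p : ℝ) : EReal) ≤ conjF X f p)
    (hlsc : LowerSemicontinuous f)
    (z : X × StrongDual ℝ X) (hz : z ∉ Mset X f) :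
    ∃ u : ℕ → X × StrongDual ℝ X,
      (∀ n, u n ∈ Mset X f) ∧
      (∃ C : ℝ, ∀ n, nrm2 (u n) ≤ C) ∧
      (∀ n, (u n).1 ≠ z.1) ∧
      (∀ n, (u n).2 ≠ z.2) ∧
      Tendsto (fun n =>
          ((u n).2 - z.2) ((u n).1 - z.1) / (‖(u n).1 - z.1‖ * ‖(u n).2 - z.2‖))
        atTop (nhds (-1)) :=
  stmt19_general f hproper hconv hge hgeS hlsc z hz
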